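/- arXiv:2407.15306 — 6 statements merged into one kernel-verified Lean document; each statement's English description precedes it below -/
import Mathlib

section
/- Let P be a polynomial over ℂ of degree n with P(0) ≠ 0, let p ∈ (0,∞), and suppose the p-norm ‖P‖_p = (∫_{0}^{1} |P(e^{2πiθ})|^p dθ)^{1/p} satisfies ‖P‖_p ≥ 1. Let E = {θ ∈ [0,1] : |P(e^{2πiθ})| < 1}. Then m⁺(P) := ∫_{0}^{1} max(0, log|P(e^{2πiθ})|) dθ ≤ (1 − |E|)·log‖P‖_p + 1/(e·p), where |E| denotes the Lebesgue measure of E. -/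
/-!
Put `N = ‖f‖_p ≥ 1`. Applying `log z ≤ z / e` to `z = (f / N) ^ p` gives, wherever
`f ≥ 1`, `log f ≤ log N + (f / N) ^ p / (e p)`, while on `E = {f < 1}` the positive part
of `log f` vanishes. Integrating `log⁺ f ≤ 𝟙_{Eᶜ} log N + (f / N) ^ p / (e p)` against a
probability measure, and using `∫ (f / N) ^ p = 1`, yields the bound.
-/

open MeasureTheory Real

namespace Real

theorem log_le_div_exp_one {z : ℝ} (hz : 0 < z) : log z ≤ z / exp 1 := by
  rw [le_div_iff₀' (exp_pos 1)]
  calc exp 1 * log z ≤ exp (log z) := exp_one_mul_le_exp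
    _ = z := exp_log hz

theorem log_le_log_add_rpow_div {y N p : ℝ} (hy : 0 < y) (hN : 0 < N) (hp : 0 < p) :
    log y ≤ log N + (y / N) ^ p / (exp 1 * p) := by
  have h := log_le_div_exp_one (rpow_pos_of_pos (div_pos hy hN) p)
  rw [log_rpow (div_pos hy hN), log_div hy.ne' hN.ne'] at h
  have h' : log y - log N ≤ (y / N) ^ p / exp 1 / p := (le_div_iff₀ hp).2 (by linarith)
  rw [div_div] at h'
  linarith

end Real

theorem integral_posLog_le_of_one_le_lpNorm {α : Type*} [MeasurableSpace α]
    {μ : Measure α} [IsProbabilityMeasure μ] {f : α → ℝ} (hf : Measurable f)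
    (hf0 : ∀ x, 0 ≤ f x) {p : ℝ} (hp : 0 < p) (hfp : Integrable (fun x => f x ^ p) μ)
    (hN : 1 ≤ (∫ x, f x ^ p ∂μ) ^ (1 / p)) :
    ∫ x, log⁺ (f x) ∂μ ≤
      (1 - μ.real {x | f x < 1}) * log ((∫ x, f x ^ p ∂μ) ^ (1 / p)) + 1 / (exp 1 * p) := by
  have hNp : ((∫ x, f x ^ p ∂μ) ^ (1 / p)) ^ p = ∫ x, f x ^ p ∂μ := by
    rw [one_div, rpow_inv_rpow (integral_nonneg fun x => rpow_nonneg (hf0 x) p) hp.ne']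
  set N := (∫ x, f x ^ p ∂μ) ^ (1 / p)
  set S := {x | f x < 1}
  have hS : MeasurableSet S := measurableSet_lt hf measurable_const
  have hN0 : 0 < N := one_pos.trans_le hN
  have hbound : ∀ x,
      log⁺ (f x) ≤ Sᶜ.indicator (fun _ => log N) x + f x ^ p / (N ^ p * (exp 1 * p)) := by
    intro x
    by_cases hx : x ∈ S
    · have := rpow_nonneg (hf0 x) p
      rw [Set.indicator_of_notMem (not_not_intro hx),
        (posLog_eq_zero_iff _).2 (abs_le.2 ⟨by linarith [hf0 x], hx.le⟩), zero_add]
      positivity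
    · have h1 : 1 ≤ f x := not_lt.1 hx
      rw [Set.indicator_of_mem hx, posLog_eq_log (by rwa [abs_of_nonneg (hf0 x)])]
      have := log_le_log_add_rpow_div (one_pos.trans_le h1) hN0 hp
      rwa [div_rpow (hf0 x) hN0.le, div_div] at this
  have hind : Integrable (Sᶜ.indicator fun _ => log N) μ :=
    (integrable_const _).indicator hS.compl
  calc ∫ x, log⁺ (f x) ∂μ
      ≤ ∫ x, (Sᶜ.indicator (fun _ => log N) x + f x ^ p / (N ^ p * (exp 1 * p))) ∂μ :=
        integral_mono_of_nonneg (.of_forall fun _ => posLog_nonneg)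
          (hind.add (hfp.div_const _)) (.of_forall hbound)
    _ = μ.real Sᶜ * log N + 1 / (exp 1 * p) := by
        rw [integral_add hind (hfp.div_const _), integral_indicator_const _ hS.compl,
          integral_div, ← hNp, smul_eq_mul]
        field_simp [(rpow_pos_of_pos hN0 p).ne']
    _ = (1 - μ.real S) * log N + 1 / (exp 1 * p) := by rw [probReal_compl_eq_one_sub hS]

theorem stmt1_general (P : Polynomial ℂ) (p : ℝ) (hp : 0 < p)
    (Pnorm : ℝ)
    (hPnorm : Pnorm =
      (∫ θ in (0:ℝ)..1,
        (‖P.eval (Complex.exp (2 * Real.pi * Complex.I * (θ:ℂ)))‖)^p) ^ (1/p))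
    (hge : 1 ≤ Pnorm)
    (E : Set ℝ)
    (hE : E = {θ ∈ Set.Icc (0:ℝ) 1 |
      ‖P.eval (Complex.exp (2 * Real.pi * Complex.I * (θ:ℂ)))‖ < 1}) :
    (∫ θ in (0:ℝ)..1,
        max 0 (Real.log (‖P.eval (Complex.exp (2 * Real.pi * Complex.I * (θ:ℂ)))‖)))
      ≤ (1 - (volume E).toReal) * Real.log Pnorm + 1 / (Real.exp 1 * p) := by
  have hf : Continuous fun θ : ℝ =>
      ‖P.eval (Complex.exp (2 * Real.pi * Complex.I * (θ:ℂ)))‖ := by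
    fun_prop
  have : IsProbabilityMeasure (volume.restrict (Set.Ioc (0:ℝ) 1)) := ⟨by simp⟩
  have hvol : volume E = volume.restrict (Set.Ioc 0 1)
      {θ : ℝ | ‖P.eval (Complex.exp (2 * Real.pi * Complex.I * (θ:ℂ)))‖ < 1} := by
    rw [Measure.restrict_congr_set Ioc_ae_eq_Icc,
      Measure.restrict_apply (measurableSet_lt hf.measurable measurable_const), hE,
      Set.inter_comm]
    rfl
  simp only [intervalIntegral.integral_of_le zero_le_one] at hPnorm ⊢
  subst hPnorm
  rw [hvol, ← measureReal_def]
  exact integral_posLog_le_of_one_le_lpNorm hf.measurable (fun _ => norm_nonneg _) hp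
    ((hf.rpow_const fun _ => Or.inr hp.le).integrableOn_Icc.mono_set Set.Ioc_subset_Icc_self) hge

theorem stmt1 (P : Polynomial ℂ) (n : ℕ) (hdeg : P.natDegree = n)
    (h0 : P.eval 0 ≠ 0) (p : ℝ) (hp : 0 < p)
    (Pnorm : ℝ)
    (hPnorm : Pnorm =
      (∫ θ in (0:ℝ)..1,
        (‖P.eval (Complex.exp (2 * Real.pi * Complex.I * (θ:ℂ)))‖)^p) ^ (1/p))
    (hge : 1 ≤ Pnorm)
    (E : Set ℝ)
    (hE : E = {θ ∈ Set.Icc (0:ℝ) 1 |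
      ‖P.eval (Complex.exp (2 * Real.pi * Complex.I * (θ:ℂ)))‖ < 1}) :
    (∫ θ in (0:ℝ)..1,
        max 0 (Real.log (‖P.eval (Complex.exp (2 * Real.pi * Complex.I * (θ:ℂ)))‖)))
      ≤ (1 - (volume E).toReal) * Real.log Pnorm + 1 / (Real.exp 1 * p) :=
  stmt1_general P p hp Pnorm hPnorm hge E hE
end

section
/- For all x with 0 ≤ x ≤ 1, arcsin(x) ≤ πx / (2 + (π − 2)√(1 − x²)). -/
/-!
With `x = sin θ` the inequality becomes `(2 + (π - 2) cos θ) θ ≤ π sin θ` for `θ ∈ [0, π/2]`.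
For `θ ≤ 6/5` we bound `cos θ` and `sin θ` by their Taylor polynomials of degree 4 and 7; these
bounds hold for all `θ ≥ 0` because the error of each partial sum has, up to sign, the error of the
previous one as derivative. What remains is `θ³` times a factor that stays positive up to `6/5`.
Near `π/2` we write `θ = π/2 - t` and the bounds `sin t ≤ t`, `1 - t²/2 ≤ cos t` suffice.
-/
open Real Finset Nat

noncomputable def sinTaylor (n : ℕ) (t : ℝ) : ℝ :=
  ∑ k ∈ range n, (-1) ^ k * t ^ (2 * k + 1) / (2 * k + 1)!

noncomputable def cosTaylor (n : ℕ) (t : ℝ) : ℝ :=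
  ∑ k ∈ range n, (-1) ^ k * t ^ (2 * k) / (2 * k)!

lemma hasDerivAt_sinTaylor (n : ℕ) (t : ℝ) : HasDerivAt (sinTaylor n) (cosTaylor n t) t := by
  refine (HasDerivAt.fun_sum fun k _ =>
    ((hasDerivAt_pow (2 * k + 1) t).const_mul ((-1 : ℝ) ^ k)).div_const
      ((2 * k + 1)! : ℝ)).congr_deriv (sum_congr rfl fun k _ => ?_)
  rw [Nat.factorial_succ]
  push_cast
  field_simp

lemma cosTaylor_succ (n : ℕ) :
    cosTaylor (n + 1) =
      fun t : ℝ => 1 - ∑ k ∈ range n, (-1) ^ k * t ^ (2 * k + 2) / (2 * k + 2)! := by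
  ext t
  simp only [cosTaylor, sum_range_succ']
  simp [pow_succ, mul_add, neg_div, sub_eq_add_neg, add_comm]

lemma hasDerivAt_cosTaylor_succ (n : ℕ) (t : ℝ) :
    HasDerivAt (cosTaylor (n + 1)) (-sinTaylor n t) t := by
  rw [cosTaylor_succ]
  refine ((HasDerivAt.fun_sum fun k _ =>
    ((hasDerivAt_pow (2 * k + 2) t).const_mul ((-1 : ℝ) ^ k)).div_const
      ((2 * k + 2)! : ℝ)).const_sub 1).congr_deriv ?_
  rw [sinTaylor]
  refine congrArg _ (sum_congr rfl fun k _ => ?_)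
  rw [Nat.factorial_succ (2 * k + 1)]
  push_cast
  field_simp
  ring

lemma nonneg_of_hasDerivAt_nonneg {g g' : ℝ → ℝ} (hg : ∀ t, HasDerivAt g (g' t) t)
    (hg₀ : g 0 = 0) (hg' : ∀ t, 0 ≤ t → 0 ≤ g' t) {t : ℝ} (ht : 0 ≤ t) : 0 ≤ g t := by
  have hmono : MonotoneOn g (Set.Ici 0) :=
    monotoneOn_of_hasDerivWithinAt_nonneg (convex_Ici 0)
      (fun x _ => (hg x).continuousAt.continuousWithinAt) (fun x _ => (hg x).hasDerivWithinAt)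
      (fun x hx => hg' x (interior_subset hx))
  simpa [hg₀] using hmono Set.self_mem_Ici ht ht

lemma neg_one_pow_mul_sinTaylor_sub_sin_nonneg_of_cos (n : ℕ)
    (hcos : ∀ t, 0 ≤ t → 0 ≤ (-1) ^ n * (cosTaylor (n + 1) t - cos t)) {t : ℝ} (ht : 0 ≤ t) :
    0 ≤ (-1) ^ n * (sinTaylor (n + 1) t - sin t) :=
  nonneg_of_hasDerivAt_nonneg
    (fun t => ((hasDerivAt_sinTaylor _ t).sub (hasDerivAt_sin t)).const_mul _)
    (by simp [sinTaylor]) hcos ht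

lemma neg_one_pow_mul_cosTaylor_sub_cos_nonneg (n : ℕ) {t : ℝ} (ht : 0 ≤ t) :
    0 ≤ (-1) ^ n * (cosTaylor (n + 1) t - cos t) := by
  induction n generalizing t with
  | zero => simpa [cosTaylor] using cos_le_one t
  | succ n ih =>
    refine nonneg_of_hasDerivAt_nonneg
      (fun t =>
        ((hasDerivAt_cosTaylor_succ _ t).sub (hasDerivAt_cos t)).const_mul ((-1) ^ (n + 1)))
      (by simp [cosTaylor_succ]) (fun t ht => ?_) ht
    have := neg_one_pow_mul_sinTaylor_sub_sin_nonneg_of_cos n (fun _ => ih) ht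
    linear_combination this

lemma neg_one_pow_mul_sinTaylor_sub_sin_nonneg (n : ℕ) {t : ℝ} (ht : 0 ≤ t) :
    0 ≤ (-1) ^ n * (sinTaylor (n + 1) t - sin t) :=
  neg_one_pow_mul_sinTaylor_sub_sin_nonneg_of_cos n
    (fun _ => neg_one_pow_mul_cosTaylor_sub_cos_nonneg n) ht

lemma cos_le_taylor_four {t : ℝ} (ht : 0 ≤ t) : cos t ≤ 1 - t ^ 2 / 2 + t ^ 4 / 24 := by
  have := neg_one_pow_mul_cosTaylor_sub_cos_nonneg 2 ht
  norm_num [cosTaylor, sum_range_succ, Nat.factorial] at this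
  linarith

lemma taylor_seven_le_sin {t : ℝ} (ht : 0 ≤ t) :
    t - t ^ 3 / 6 + t ^ 5 / 120 - t ^ 7 / 5040 ≤ sin t := by
  have := neg_one_pow_mul_sinTaylor_sub_sin_nonneg 3 ht
  norm_num [sinTaylor, sum_range_succ, Nat.factorial] at this
  linarith

lemma pi_sub_two_pos : 0 < π - 2 := by linarith [pi_gt_three]

lemma sharpShaferFink_poly_of_le_six_fifths {θ : ℝ} (h₀ : 0 ≤ θ) (h₁ : θ ≤ 6 / 5) :
    (2 + (π - 2) * (1 - θ ^ 2 / 2 + θ ^ 4 / 24)) * θ ≤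
      π * (θ - θ ^ 3 / 6 + θ ^ 5 / 120 - θ ^ 7 / 5040) := by
  have hu : θ ^ 2 ≤ 36 / 25 := by nlinarith
  have hB : 0 ≤ π * (1 / 3 - θ ^ 2 / 30 - θ ^ 4 / 5040) - 1 + θ ^ 2 / 12 := by
    nlinarith [pi_gt_d2, sq_nonneg θ, mul_nonneg (sq_nonneg θ) (sub_nonneg.2 hu)]
  linarith [mul_nonneg (pow_nonneg h₀ 3) hB]

lemma sharpShaferFink_poly_complement {t : ℝ} (h₀ : 0 ≤ t) (h₁ : t ≤ 3 / 8) :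
    (2 + (π - 2) * t) * (π / 2 - t) ≤ π * (1 - t ^ 2 / 2) := by
  have hB : 0 ≤ 2 - (π - 2) * π / 2 + (π / 2 - 2) * t := by
    nlinarith [pi_gt_d2, pi_lt_d2]
  linarith [mul_nonneg h₀ hB]

lemma sharpShaferFink_trig_of_le_six_fifths {θ : ℝ} (h₀ : 0 ≤ θ) (h₁ : θ ≤ 6 / 5) :
    (2 + (π - 2) * cos θ) * θ ≤ π * sin θ :=
  calc (2 + (π - 2) * cos θ) * θ
      ≤ (2 + (π - 2) * (1 - θ ^ 2 / 2 + θ ^ 4 / 24)) * θ := by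
        gcongr
        · exact pi_sub_two_pos.le
        · exact cos_le_taylor_four h₀
    _ ≤ π * (θ - θ ^ 3 / 6 + θ ^ 5 / 120 - θ ^ 7 / 5040) :=
        sharpShaferFink_poly_of_le_six_fifths h₀ h₁
    _ ≤ π * sin θ := by gcongr; exact taylor_seven_le_sin h₀

lemma sharpShaferFink_trig_complement {t : ℝ} (h₀ : 0 ≤ t) (h₁ : t ≤ 3 / 8) :
    (2 + (π - 2) * sin t) * (π / 2 - t) ≤ π * cos t :=
  calc (2 + (π - 2) * sin t) * (π / 2 - t)
      ≤ (2 + (π - 2) * t) * (π / 2 - t) := by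
        gcongr
        · linarith [pi_gt_three]
        · exact pi_sub_two_pos.le
        · exact sin_le h₀
    _ ≤ π * (1 - t ^ 2 / 2) := sharpShaferFink_poly_complement h₀ h₁
    _ ≤ π * cos t := by gcongr; exact one_sub_sq_div_two_le_cos

lemma sharpShaferFink_trig {θ : ℝ} (h₀ : 0 ≤ θ) (h₁ : θ ≤ π / 2) :
    (2 + (π - 2) * cos θ) * θ ≤ π * sin θ := by
  rcases le_total θ (6 / 5) with hθ | hθ
  · exact sharpShaferFink_trig_of_le_six_fifths h₀ hθ
  · have := sharpShaferFink_trig_complement (t := π / 2 - θ) (by linarith)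
      (by linarith [pi_lt_d2])
    rwa [sin_pi_div_two_sub, cos_pi_div_two_sub, sub_sub_cancel] at this

theorem stmt6 (x : ℝ) (h0 : 0 ≤ x) (h1 : x ≤ 1) :
    Real.arcsin x ≤ Real.pi * x / (2 + (Real.pi - 2) * Real.sqrt (1 - x^2)) := by
  have hkey := sharpShaferFink_trig (arcsin_nonneg.2 h0) (arcsin_le_pi_div_two x)
  rw [sin_arcsin (by linarith) h1, cos_arcsin] at hkey
  have hden : 0 < 2 + (π - 2) * √(1 - x ^ 2) := by
    have := mul_nonneg pi_sub_two_pos.le (sqrt_nonneg (1 - x ^ 2))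
    linarith
  rwa [le_div_iff₀ hden, mul_comm]
end

section
/- Let P(z) = ∑_{k=0}^n c_k z^k be a complex polynomial of degree n with P(0) ≠ 0 and |c_0 c_n| ≥ 1, and let p ∈ (0,∞) with ‖P‖_p ≥ 1. Let E = {θ ∈ [0,1] : |P(e^{2πiθ})| < 1} and B_p(P) = (1 − |E|)·log‖P‖_p + 1/(e·p). Then the logarithmic Mahler measure satisfies m(P/√|c_0 c_n|) = ∫_0^1 log(|P(e^{2πiθ})|/√|c_0 c_n|) dθ ≤ B_p(P). -/
/-!
Since `|c₀ cₙ| ≥ 1`, dividing by `√|c₀ cₙ|` only lowers `log |P|`, so it suffices to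
bound `∫ log |P|`. Pointwise, `log |P| ≤ 0` on `E`, while off `E` the inequality
`e · log x ≤ x` applied to `(|P| / ‖P‖_p)^p` gives
`log |P| ≤ log ‖P‖_p + |P|^p / (e p ‖P‖_p^p)`. Integrating,
the last term contributes exactly `1 / (e p)`.
-/

open MeasureTheory Set

namespace Real

lemma log_le_rpow_div_exp_one_mul {x p : ℝ} (hx : 0 ≤ x) (hp : 0 < p) :
    log x ≤ x ^ p / (exp 1 * p) := by
  rcases hx.eq_or_lt with rfl | hx
  · rw [log_zero]; positivity
  rw [le_div_iff₀ (by positivity), mul_comm, mul_assoc, ← log_rpow hx]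
  simpa [exp_log (rpow_pos_of_pos hx p)] using exp_one_mul_le_exp (x := log (x ^ p))

lemma log_div_le_ite_add_rpow {y s N p : ℝ} (hy : 0 ≤ y) (hs : 1 ≤ s) (hN : 0 < N)
    (hp : 0 < p) :
    log (y / s) ≤ (if y < 1 then 0 else log N) + y ^ p / (exp 1 * p * N ^ p) := by
  have hrest : 0 ≤ y ^ p / (exp 1 * p * N ^ p) := by positivity
  have hys : log (y / s) ≤ log y := by
    rcases hy.eq_or_lt with rfl | hy
    · simp
    exact log_le_log (by positivity) (div_le_self hy.le hs)
  split_ifs with hy1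
  · linarith [log_nonpos hy hy1.le]
  · have hyN := log_le_rpow_div_exp_one_mul (div_nonneg hy hN.le) hp
    rw [log_div (by linarith) hN.ne', div_rpow hy hN.le, div_div,
      mul_comm (N ^ p)] at hyN
    linarith

end Real

lemma intervalIntegral_indicator_const_of_subset_Icc {E : Set ℝ} (hE : MeasurableSet E)
    (hsub : E ⊆ Icc 0 1) (a : ℝ) :
    ∫ θ in (0:ℝ)..1, E.indicator (fun _ ↦ a) θ = volume.real E * a := by
  rw [intervalIntegral.integral_of_le zero_le_one, ← integral_Icc_eq_integral_Ioc,
    setIntegral_indicator hE, inter_eq_right.mpr hsub, setIntegral_const, smul_eq_mul]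

lemma intervalIntegral_log_div_le {f : ℝ → ℝ} (hf : Continuous f) (hf0 : ∀ θ, 0 ≤ f θ)
    {s p N : ℝ} (hs : 1 ≤ s) (hp : 0 < p)
    (hN : N = (∫ θ in (0:ℝ)..1, f θ ^ p) ^ (1 / p)) (hN1 : 1 ≤ N) :
    ∫ θ in (0:ℝ)..1, Real.log (f θ / s)
      ≤ (1 - volume.real {θ ∈ Icc (0:ℝ) 1 | f θ < 1}) * Real.log N
        + 1 / (Real.exp 1 * p) := by
  set E := {θ ∈ Icc (0:ℝ) 1 | f θ < 1}
  have hN0 : 0 < N := zero_lt_one.trans_le hN1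
  have hE : MeasurableSet E :=
    measurableSet_Icc.inter (measurableSet_lt hf.measurable measurable_const)
  have hEsub : E ⊆ Icc 0 1 := fun _ h ↦ h.1
  have hE1 : volume.real E ≤ 1 := by
    simpa using measureReal_mono (μ := volume) hEsub (by simp)
  have hNp : ∫ θ in (0:ℝ)..1, f θ ^ p = N ^ p := by
    rw [hN, one_div, Real.rpow_inv_rpow (intervalIntegral.integral_nonneg zero_le_one
      fun θ _ ↦ Real.rpow_nonneg (hf0 θ) p) hp.ne']
  set g : ℝ → ℝ := fun θ ↦
    Real.log N - E.indicator (fun _ ↦ Real.log N) θ + f θ ^ p / (Real.exp 1 * p * N ^ p)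
  have hlogN : 0 ≤ Real.log N := Real.log_nonneg hN1
  by_cases hint : IntervalIntegrable (fun θ ↦ Real.log (f θ / s)) volume 0 1
  swap
  · -- the integral then takes the junk value `0`, and the bound is nonnegative
    rw [intervalIntegral.integral_undef hint]
    have : 0 ≤ (1 - volume.real E) * Real.log N := mul_nonneg (by linarith) hlogN
    positivity
  have hind : IntervalIntegrable (E.indicator fun _ ↦ Real.log N) volume 0 1 :=
    ⟨intervalIntegrable_const.1.indicator hE, intervalIntegrable_const.2.indicator hE⟩
  have hpow : IntervalIntegrable (fun θ ↦ f θ ^ p / (Real.exp 1 * p * N ^ p)) volume 0 1 :=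
    ((hf.rpow_const fun _ ↦ Or.inr hp.le).div_const _).intervalIntegrable 0 1
  have hle : ∀ θ ∈ Icc (0:ℝ) 1, Real.log (f θ / s) ≤ g θ := by
    intro θ hθ
    have hθE : θ ∈ E ↔ f θ < 1 := ⟨fun h ↦ h.2, fun h ↦ ⟨hθ, h⟩⟩
    convert Real.log_div_le_ite_add_rpow (hf0 θ) hs hN0 hp using 2
    by_cases h : f θ < 1 <;> simp [indicator, hθE, h]
  have hg : ∫ θ in (0:ℝ)..1, g θ
      = (1 - volume.real E) * Real.log N + 1 / (Real.exp 1 * p) := by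
    rw [intervalIntegral.integral_add (intervalIntegrable_const.sub hind) hpow,
      intervalIntegral.integral_sub intervalIntegrable_const hind,
      intervalIntegral_indicator_const_of_subset_Icc hE hEsub, intervalIntegral.integral_const,
      intervalIntegral.integral_div, hNp]
    field_simp
    ring
  exact (intervalIntegral.integral_mono_on zero_le_one hint
    ((intervalIntegrable_const.sub hind).add hpow) hle).trans_eq hg

theorem stmt9_general (P : Polynomial ℂ)
    (hc : 1 ≤ ‖P.coeff 0 * P.leadingCoeff‖)
    (p : ℝ) (hp : 0 < p)
    (Pnorm : ℝ)
    (hPnorm : Pnorm =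
      (∫ θ in (0:ℝ)..1,
        (‖P.eval (Complex.exp (2 * Real.pi * Complex.I * (θ:ℂ)))‖)^p) ^ (1/p))
    (hge : 1 ≤ Pnorm)
    (E : Set ℝ)
    (hE : E = {θ ∈ Set.Icc (0:ℝ) 1 |
      ‖P.eval (Complex.exp (2 * Real.pi * Complex.I * (θ:ℂ)))‖ < 1}) :
    (∫ θ in (0:ℝ)..1,
        Real.log (‖P.eval (Complex.exp (2 * Real.pi * Complex.I * (θ:ℂ)))‖ /
          Real.sqrt (‖P.coeff 0 * P.leadingCoeff‖)))
      ≤ (1 - (volume E).toReal) * Real.log Pnorm + 1 / (Real.exp 1 * p) := by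
  have hcont : Continuous fun θ : ℝ ↦
      ‖P.eval (Complex.exp (2 * Real.pi * Complex.I * (θ:ℂ)))‖ := by fun_prop
  have hsqrt : 1 ≤ Real.sqrt ‖P.coeff 0 * P.leadingCoeff‖ := Real.one_le_sqrt.mpr hc
  subst hE
  exact intervalIntegral_log_div_le hcont (fun _ ↦ norm_nonneg _) hsqrt hp hPnorm hge

theorem stmt9 (P : Polynomial ℂ) (n : ℕ) (hdeg : P.natDegree = n)
    (h0 : P.eval 0 ≠ 0)
    (hc : 1 ≤ ‖P.coeff 0 * P.leadingCoeff‖)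
    (p : ℝ) (hp : 0 < p)
    (Pnorm : ℝ)
    (hPnorm : Pnorm =
      (∫ θ in (0:ℝ)..1,
        (‖P.eval (Complex.exp (2 * Real.pi * Complex.I * (θ:ℂ)))‖)^p) ^ (1/p))
    (hge : 1 ≤ Pnorm)
    (E : Set ℝ)
    (hE : E = {θ ∈ Set.Icc (0:ℝ) 1 |
      ‖P.eval (Complex.exp (2 * Real.pi * Complex.I * (θ:ℂ)))‖ < 1}) :
    (∫ θ in (0:ℝ)..1,
        Real.log (‖P.eval (Complex.exp (2 * Real.pi * Complex.I * (θ:ℂ)))‖ /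
          Real.sqrt (‖P.coeff 0 * P.leadingCoeff‖)))
      ≤ (1 - (volume E).toReal) * Real.log Pnorm + 1 / (Real.exp 1 * p) :=
  stmt9_general P hc p hp Pnorm hPnorm hge E hE
end

section
/- Let P(z) = c_n ∏_{j=1}^n (z − α_j) be a complex polynomial of degree n with c_0 = P(0) ≠ 0, and let 0 < ρ < 1. Then the number of roots α_j (counted with multiplicity) satisfying |α_j| ≤ ρ or |α_j| ≥ 1/ρ is at most (2/(1 − ρ))·m(P/√|c_0 c_n|), where m(Q) = ∫_0^1 log|Q(e^{2πiθ})| dθ is the logarithmic Mahler measure. -/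
/-!
Writing `K = √|c₀ cₙ|` and `|c₀| = |cₙ| ∏ |αⱼ|`, Jensen's formula
`m(P) = log |cₙ| + ∑ log⁺ |αⱼ|` gives
`m(P / K) = ∑ (log⁺ |αⱼ| - ½ log |αⱼ|) = ½ ∑ |log |αⱼ||`.
Every summand is nonnegative, and a root outside the annulus `ρ < |z| < 1/ρ` contributes
at least `½ log (1/ρ) ≥ (1 - ρ)/2`.
-/

open MeasureTheory Polynomial Real
open scoped Classical

theorem intervalIntegral_exp_two_pi_I_mul_eq_circleAverage {E : Type*} [NormedAddCommGroup E]
    [NormedSpace ℝ E] (f : ℂ → E) :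
    ∫ θ in (0:ℝ)..1, f (Complex.exp (2 * π * Complex.I * θ)) = circleAverage f 0 1 := by
  have h := intervalIntegral.integral_comp_mul_left (a := 0) (b := 1)
    (fun t => f (circleMap 0 1 t)) two_pi_pos.ne'
  simp only [mul_zero, mul_one] at h
  rw [circleAverage_def, ← h]
  congr with θ
  simp [circleMap]
  ring_nf

theorem one_sub_le_abs_log {x ρ : ℝ} (hx : 0 < x) (hρ : 0 < ρ) (h : x ≤ ρ ∨ 1 / ρ ≤ x) :
    1 - ρ ≤ |log x| := by
  have hlogρ : 1 - ρ ≤ -log ρ := by simpa using one_sub_inv_le_log_of_pos (inv_pos.2 hρ)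
  rcases h with h | h
  · linarith [log_le_log hx h, neg_le_abs (log x)]
  · have := log_le_log (by positivity) h
    rw [one_div, log_inv] at this
    linarith [le_abs_self (log x)]

theorem Multiset.card_filter_mul_le_sum_map {α : Type*} (s : Multiset α) (p : α → Prop)
    [DecidablePred p] (f : α → ℝ) (c : ℝ) (hf : ∀ a ∈ s, 0 ≤ f a) (hc : ∀ a ∈ s, p a → c ≤ f a) :
    (s.filter p).card * c ≤ (s.map f).sum := by
  calc ((s.filter p).card : ℝ) * c = ((s.filter p).map f).card • c := by simp
    _ ≤ ((s.filter p).map f).sum := by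
        refine Multiset.card_nsmul_le_sum ?_
        simp only [Multiset.mem_map, Multiset.mem_filter]
        rintro _ ⟨a, ⟨ha, hpa⟩, rfl⟩
        exact hc a ha hpa
    _ ≤ ((s.filter p).map f).sum + ((s.filter (¬p ·)).map f).sum :=
        le_add_of_nonneg_right <| Multiset.sum_nonneg <| by
          simp only [Multiset.mem_map, Multiset.mem_filter]
          rintro _ ⟨a, ⟨ha, -⟩, rfl⟩
          exact hf a ha
    _ = (s.map f).sum := by rw [← Multiset.sum_add, ← Multiset.map_add, Multiset.filter_add_not]

namespace Polynomial

theorem ne_zero_of_mem_roots_of_coeff_zero_ne_zero {R : Type*} [CommRing R] [IsDomain R]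
    {p : R[X]} {a : R} (h0 : p.coeff 0 ≠ 0) (ha : a ∈ p.roots) : a ≠ 0 := by
  rintro rfl
  exact h0 (by rw [coeff_zero_eq_eval_zero]; exact isRoot_of_mem_roots ha)

theorem log_norm_coeff_zero_eq {P : ℂ[X]} (h0 : P.coeff 0 ≠ 0) :
    log ‖P.coeff 0‖ = log ‖P.leadingCoeff‖ + (P.roots.map fun α => log ‖α‖).sum := by
  have hP : P ≠ 0 := fun h => h0 (by simp [h])
  have hroots : ∀ x ∈ P.roots.map normHom, x ≠ 0 := by
    simp only [Multiset.mem_map]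
    rintro _ ⟨α, hα, rfl⟩
    simpa using ne_zero_of_mem_roots_of_coeff_zero_ne_zero h0 hα
  rw [(IsAlgClosed.splits P).coeff_zero_eq_leadingCoeff_mul_prod_roots, norm_mul, norm_mul,
    norm_pow, norm_neg, norm_one, one_pow, one_mul,
    show ‖P.roots.prod‖ = (P.roots.map normHom).prod from map_multiset_prod (normHom : ℂ →*₀ ℝ) _,
    log_mul (by simpa using hP) (Multiset.prod_ne_zero fun h => hroots 0 h rfl),
    log_multiset_prod hroots, Multiset.map_map]
  rfl

theorem logMahlerMeasure_C_inv_sqrt_mul_eq_sum_abs_log_roots {P : ℂ[X]} (h0 : P.coeff 0 ≠ 0) :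
    (C ((√‖P.coeff 0 * P.leadingCoeff‖ : ℂ))⁻¹ * P).logMahlerMeasure =
      (P.roots.map fun α => |log ‖α‖|).sum / 2 := by
  have hP : P ≠ 0 := fun h => h0 (by simp [h])
  have hn : P.leadingCoeff ≠ 0 := leadingCoeff_ne_zero.2 hP
  have hK : (√‖P.coeff 0 * P.leadingCoeff‖ : ℂ)⁻¹ ≠ 0 := by simp [h0, hn]
  have hposLog (α : ℂ) : log⁺ ‖α‖ = (log ‖α‖ + |log ‖α‖|) / 2 := by
    rw [← half_mul_log_add_log_abs]; ring
  rw [logMahlerMeasure_C_mul hK hP, logMahlerMeasure_eq_log_leadingCoeff_add_sum_log_roots,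
    norm_inv, Complex.norm_real, norm_of_nonneg (sqrt_nonneg _), log_inv,
    log_sqrt (norm_nonneg _), norm_mul, log_mul (norm_ne_zero_iff.2 h0) (norm_ne_zero_iff.2 hn),
    log_norm_coeff_zero_eq h0]
  simp only [hposLog, Multiset.sum_map_div, Multiset.sum_map_add]
  ring

end Polynomial

theorem stmt10_general (P : Polynomial ℂ)
    (h0 : P.eval 0 ≠ 0) (ρ : ℝ) (hρ0 : 0 < ρ) (hρ1 : ρ < 1) :
    ((P.roots.filter (fun z => ‖z‖ ≤ ρ ∨ 1/ρ ≤ ‖z‖)).card : ℝ)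
      ≤ (2 / (1 - ρ)) *
        ∫ θ in (0:ℝ)..1,
          Real.log (‖P.eval (Complex.exp (2 * Real.pi * Complex.I * (θ:ℂ)))‖ /
            Real.sqrt (‖P.coeff 0 * P.leadingCoeff‖)) := by
  rw [← coeff_zero_eq_eval_zero] at h0
  have hintegral : ∫ θ in (0:ℝ)..1,
      log (‖P.eval (Complex.exp (2 * π * Complex.I * θ))‖ / √‖P.coeff 0 * P.leadingCoeff‖) =
        (C ((√‖P.coeff 0 * P.leadingCoeff‖ : ℂ))⁻¹ * P).logMahlerMeasure := by
    rw [logMahlerMeasure_def, ← intervalIntegral_exp_two_pi_I_mul_eq_circleAverage]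
    simp only [eval_mul, eval_C, norm_mul, norm_inv, Complex.norm_real,
      norm_of_nonneg (sqrt_nonneg _), div_eq_inv_mul]
  have hcount := Multiset.card_filter_mul_le_sum_map P.roots _ (fun α => |log ‖α‖|) (1 - ρ)
    (fun _ _ => abs_nonneg _) fun _ hα hout => one_sub_le_abs_log
      (norm_pos_iff.2 (ne_zero_of_mem_roots_of_coeff_zero_ne_zero h0 hα)) hρ0 hout
  rw [hintegral, logMahlerMeasure_C_inv_sqrt_mul_eq_sum_abs_log_roots h0, mul_div_left_comm,
    div_div_cancel_left' two_ne_zero, ← div_eq_mul_inv, le_div_iff₀ (sub_pos.2 hρ1)]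
  exact hcount

theorem stmt10 (P : Polynomial ℂ) (n : ℕ) (hdeg : P.natDegree = n)
    (h0 : P.eval 0 ≠ 0) (ρ : ℝ) (hρ0 : 0 < ρ) (hρ1 : ρ < 1) :
    ((P.roots.filter (fun z => ‖z‖ ≤ ρ ∨ 1/ρ ≤ ‖z‖)).card : ℝ)
      ≤ (2 / (1 - ρ)) *
        ∫ θ in (0:ℝ)..1,
          Real.log (‖P.eval (Complex.exp (2 * Real.pi * Complex.I * (θ:ℂ)))‖ /
            Real.sqrt (‖P.coeff 0 * P.leadingCoeff‖)) :=
  stmt10_general P h0 ρ hρ0 hρ1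
end

section
/- Suppose a complex polynomial P of degree n with P(0) = c_0, leading coefficient c_n, and roots on ℂ satisfies the Erdős–Turán-type discrepancy bound: for all 0 ≤ α < β ≤ 2π, |N(α,β)/n − (β−α)/(2π)| ≤ √(2·B_∞(P)/n), where N(α,β) counts roots with argument in [α,β) and B_∞(P) = log(‖P‖_∞/√|c_0 c_n|). Fix θ ∈ [1/2, 1], set δ_n = (πa/√n)·(2B_∞(P))^θ for a real a > 1 and assume δ_n ≤ π. Then for any φ, the sector {z : φ − δ_n ≤ arg z < φ + δ_n} contains at least (a − 1)·√n·(2B_∞(P))^θ roots of P. -/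
open scoped Classical

/-- The argument of a complex number normalized to lie in `[0, 2π)`. -/
noncomputable def arg2pi (z : ℂ) : ℝ :=
  if Complex.arg z < 0 then Complex.arg z + 2 * Real.pi else Complex.arg z

/-!
Averaging `P` over a rotated copy of the `n`-th roots of unity kills every coefficient except
`c₀` and `cₙ`, and the rotation can be chosen to align them; this gives Visser's inequality
`‖P‖_∞ ≥ |c₀| + |cₙ| ≥ 2 √|c₀ cₙ|`, so `B ≥ log 2`, `2B ≥ 1` and `√(2B) ≤ (2B)^θ`.
An arc of length `2δₙ ≤ 2π` that does not wrap around `0` is an interval, so by the discrepancy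
bound it holds at least `n (2δₙ / 2π - √(2B/n))` roots; one that wraps around is the complement
of an interval of length `2π - 2δₙ`, and the same lower bound follows from the upper discrepancy
bound for that interval. Finally `n · 2δₙ / 2π = a √n (2B)^θ` and
`n √(2B/n) = √n √(2B) ≤ √n (2B)^θ`.
-/

open Polynomial Real

theorem arg2pi_mem_Ico (z : ℂ) : arg2pi z ∈ Set.Ico 0 (2 * π) := by
  have := Complex.neg_pi_lt_arg z
  have := Complex.arg_le_pi z
  unfold arg2pi
  split_ifs with h
  · constructor <;> linarith
  · constructor <;> linarith [not_lt.mp h]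

theorem Multiset.card_filter_map {α β : Type*} (f : α → β) (p : β → Prop) [DecidablePred p]
    (s : Multiset α) : ((s.map f).filter p).card = (s.filter fun a => p (f a)).card := by
  rw [← Multiset.countP_eq_card_filter, Multiset.countP_map]

theorem Multiset.card_filter_div_card_mul {α : Type*} (p : α → Prop) [DecidablePred p]
    (s : Multiset α) : ((s.filter p).card : ℝ) / s.card * s.card = (s.filter p).card :=
  div_mul_cancel_of_imp fun h => by simp_all

theorem IsPrimitiveRoot.sum_pow_pow {R : Type*} [CommRing R] [IsDomain R] {ω : R} {n : ℕ}
    (hω : IsPrimitiveRoot ω n) (k : ℕ) :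
    ∑ j ∈ Finset.range n, (ω ^ k) ^ j = if n ∣ k then (n : R) else 0 := by
  split_ifs with hk
  · simp [(hω.pow_eq_one_iff_dvd k).mpr hk]
  · have hne : ω ^ k ≠ 1 := mt (hω.pow_eq_one_iff_dvd k).mp hk
    refine eq_zero_of_ne_zero_of_mul_left_eq_zero (sub_ne_zero_of_ne hne.symm) ?_
    rw [mul_neg_geom_sum, ← pow_mul, mul_comm, pow_mul, hω.pow_eq_one, one_pow, sub_self]

theorem Polynomial.sum_eval_mul_pow_of_isPrimitiveRoot {R : Type*} [CommRing R] [IsDomain R]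
    {P : R[X]} {n : ℕ} (hn : 0 < n) (hP : P.natDegree ≤ n) {ω : R} (hω : IsPrimitiveRoot ω n)
    (ζ : R) : ∑ j ∈ Finset.range n, P.eval (ζ * ω ^ j) = n * (P.coeff 0 + P.coeff n * ζ ^ n) := by
  calc ∑ j ∈ Finset.range n, P.eval (ζ * ω ^ j)
      = ∑ k ∈ Finset.range (n + 1), P.coeff k * ζ ^ k * ∑ j ∈ Finset.range n, (ω ^ k) ^ j := by
        simp_rw [eval_eq_sum_range' (Nat.lt_succ_of_le hP), Finset.mul_sum]
        rw [Finset.sum_comm]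
        refine Finset.sum_congr rfl fun k _ => Finset.sum_congr rfl fun j _ => ?_
        ring
    _ = ∑ k ∈ Finset.range (n + 1), if n ∣ k then P.coeff k * ζ ^ k * n else 0 := by
        simp_rw [hω.sum_pow_pow, mul_ite, mul_zero]
    _ = n * (P.coeff 0 + P.coeff n * ζ ^ n) := by
        rw [Finset.sum_range_succ, Finset.sum_eq_single_of_mem 0 (Finset.mem_range.2 hn)]
        · simp only [dvd_zero, dvd_refl, if_true, pow_zero, mul_one]
          ring
        · intro k hk hk0
          rw [if_neg fun hdvd => hk0 (Nat.eq_zero_of_dvd_of_lt hdvd (Finset.mem_range.1 hk))]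

theorem Complex.norm_add_mul_exp_arg_sub_arg (a b : ℂ) :
    ‖a + b * exp ((arg a - arg b : ℝ) * I)‖ = ‖a‖ + ‖b‖ := by
  have halign :
      a + b * exp ((arg a - arg b : ℝ) * I) = ((‖a‖ + ‖b‖ : ℝ) : ℂ) * exp (arg a * I) := by
    calc a + b * exp ((arg a - arg b : ℝ) * I)
        = ‖a‖ * exp (arg a * I) + ‖b‖ * exp (arg b * I + (arg a - arg b : ℝ) * I) := by
          rw [exp_add, ← mul_assoc, norm_mul_exp_arg_mul_I, norm_mul_exp_arg_mul_I]
      _ = ((‖a‖ + ‖b‖ : ℝ) : ℂ) * exp (arg a * I) := by push_cast; ring_nf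
  rw [halign, norm_mul, norm_exp_ofReal_mul_I, mul_one, norm_real, norm_of_nonneg (by positivity)]

theorem Polynomial.exists_norm_eq_one_norm_coeff_add_le_norm_eval (P : ℂ[X]) {n : ℕ}
    (hn : 0 < n) (hP : P.natDegree ≤ n) :
    ∃ z : ℂ, ‖z‖ = 1 ∧ ‖P.coeff 0‖ + ‖P.coeff n‖ ≤ ‖P.eval z‖ := by
  set ζ := Complex.exp (((Complex.arg (P.coeff 0) - Complex.arg (P.coeff n)) / n : ℝ) * Complex.I)
  set ω := Complex.exp (2 * π * Complex.I / n)
  have hω : IsPrimitiveRoot ω n := Complex.isPrimitiveRoot_exp n hn.ne'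
  have hζn : ζ ^ n =
      Complex.exp ((Complex.arg (P.coeff 0) - Complex.arg (P.coeff n) : ℝ) * Complex.I) := by
    have : (n : ℂ) ≠ 0 := Nat.cast_ne_zero.2 hn.ne'
    rw [← Complex.exp_nat_mul]
    congr 1
    push_cast
    field_simp
  have hsum : ∑ _j ∈ Finset.range n, (‖P.coeff 0‖ + ‖P.coeff n‖) ≤
      ∑ j ∈ Finset.range n, ‖P.eval (ζ * ω ^ j)‖ :=
    calc ∑ _j ∈ Finset.range n, (‖P.coeff 0‖ + ‖P.coeff n‖)
        = ‖∑ j ∈ Finset.range n, P.eval (ζ * ω ^ j)‖ := by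
          rw [sum_eval_mul_pow_of_isPrimitiveRoot hn hP hω, hζn, norm_mul,
            Complex.norm_add_mul_exp_arg_sub_arg, Complex.norm_natCast, Finset.sum_const,
            Finset.card_range, nsmul_eq_mul]
      _ ≤ _ := norm_sum_le _ _
  obtain ⟨j, -, hj⟩ := Finset.exists_le_of_sum_le (Finset.nonempty_range_iff.2 hn.ne') hsum
  refine ⟨ζ * ω ^ j, ?_, hj⟩
  rw [norm_mul, norm_pow, hω.norm'_eq_one hn.ne', Complex.norm_exp_ofReal_mul_I, one_pow, one_mul]

theorem Polynomial.two_mul_sqrt_norm_coeff_zero_mul_leadingCoeff_le_iSup (P : ℂ[X])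
    (hP : 0 < P.natDegree) :
    2 * √‖P.coeff 0 * P.leadingCoeff‖ ≤ ⨆ z : Metric.sphere (0 : ℂ) 1, ‖P.eval (z : ℂ)‖ := by
  obtain ⟨z, hz, hle⟩ := P.exists_norm_eq_one_norm_coeff_add_le_norm_eval hP le_rfl
  have hbdd : BddAbove (Set.range fun z : Metric.sphere (0 : ℂ) 1 => ‖P.eval (z : ℂ)‖) :=
    (isCompact_range (by fun_prop)).bddAbove
  calc 2 * √‖P.coeff 0 * P.leadingCoeff‖
      = 2 * √‖P.coeff 0‖ * √‖P.leadingCoeff‖ := by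
        rw [norm_mul, Real.sqrt_mul (norm_nonneg _), mul_assoc]
    _ ≤ √‖P.coeff 0‖ ^ 2 + √‖P.leadingCoeff‖ ^ 2 := two_mul_le_add_sq _ _
    _ = ‖P.coeff 0‖ + ‖P.coeff P.natDegree‖ := by
        rw [Real.sq_sqrt (norm_nonneg _), Real.sq_sqrt (norm_nonneg _), leadingCoeff]
    _ ≤ ‖P.eval z‖ := hle
    _ ≤ _ := le_ciSup hbdd ⟨z, by simpa using hz⟩

theorem Polynomial.log_two_le_log_iSup_div_sqrt (P : ℂ[X]) (hP : 0 < P.natDegree)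
    (h0 : P.coeff 0 ≠ 0) :
    Real.log 2 ≤ Real.log ((⨆ z : Metric.sphere (0 : ℂ) 1, ‖P.eval (z : ℂ)‖) /
      √‖P.coeff 0 * P.leadingCoeff‖) := by
  have hpos : 0 < √‖P.coeff 0 * P.leadingCoeff‖ :=
    Real.sqrt_pos.2 <| norm_pos_iff.2 <|
      mul_ne_zero h0 (leadingCoeff_ne_zero.2 (ne_zero_of_natDegree_gt hP))
  exact Real.log_le_log two_pos <|
    (le_div_iff₀ hpos).2 (P.two_mul_sqrt_norm_coeff_zero_mul_leadingCoeff_le_iSup hP)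

theorem exists_int_arc_iff {c d y : ℝ} (hc : c ∈ Set.Ico 0 (2 * π)) (hd : d ≤ c + 2 * π)
    (hy : y ∈ Set.Ico 0 (2 * π)) :
    (∃ k : ℤ, c ≤ y + 2 * π * k ∧ y + 2 * π * k < d) ↔ (c ≤ y ∧ y < d) ∨ y + 2 * π < d := by
  obtain ⟨hc0, hc2⟩ := hc
  obtain ⟨hy0, hy2⟩ := hy
  have hπ := pi_pos
  constructor
  · rintro ⟨k, hck, hkd⟩
    have hk0 : (-1 : ℤ) < k := by exact_mod_cast (show (-1 : ℝ) < k by nlinarith)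
    have hk1 : k < 2 := by exact_mod_cast (show (k : ℝ) < 2 by nlinarith)
    obtain rfl | rfl : k = 0 ∨ k = 1 := by omega
    · left; constructor <;> simp_all
    · right; simpa using hkd
  · rintro (⟨hcy, hyd⟩ | hyd)
    · exact ⟨0, by simpa using hcy, by simpa using hyd⟩
    · exact ⟨1, by simp; linarith, by simpa using hyd⟩

def DiscrepancyLE (s : Multiset ℝ) (ε : ℝ) : Prop :=
  ∀ α β : ℝ, 0 ≤ α → α < β → β ≤ 2 * π →
    |((s.filter fun y => α ≤ y ∧ y < β).card : ℝ) / s.card - (β - α) / (2 * π)| ≤ ε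

namespace DiscrepancyLE

variable {s : Multiset ℝ} {ε : ℝ}

theorem card_filter_Ico_le (h : DiscrepancyLE s ε) (hε : 0 ≤ ε) {α β : ℝ} (hα : 0 ≤ α)
    (hαβ : α ≤ β) (hβ : β ≤ 2 * π) :
    ((s.filter fun y => α ≤ y ∧ y < β).card : ℝ) ≤ s.card * ((β - α) / (2 * π) + ε) := by
  obtain rfl | hlt := hαβ.eq_or_lt
  · rw [Multiset.filter_eq_nil.2 fun y _ hy => hy.1.not_gt hy.2]
    simp only [Multiset.card_zero, Nat.cast_zero, sub_self, zero_div, zero_add]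
    positivity
  · rw [← Multiset.card_filter_div_card_mul, mul_comm]
    exact mul_le_mul_of_nonneg_left (by linarith [(abs_le.1 (h α β hα hlt hβ)).2])
      (Nat.cast_nonneg _)

theorem card_filter_Ico_ge (h : DiscrepancyLE s ε) (hε : 0 ≤ ε) {α β : ℝ} (hα : 0 ≤ α)
    (hαβ : α ≤ β) (hβ : β ≤ 2 * π) :
    s.card * ((β - α) / (2 * π) - ε) ≤ ((s.filter fun y => α ≤ y ∧ y < β).card : ℝ) := by
  obtain rfl | hlt := hαβ.eq_or_lt
  · simp only [sub_self, zero_div, zero_sub]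
    exact (mul_nonpos_of_nonneg_of_nonpos (Nat.cast_nonneg _) (neg_nonpos.2 hε)).trans
      (Nat.cast_nonneg _)
  · rw [← Multiset.card_filter_div_card_mul, mul_comm (s.card : ℝ)]
    exact mul_le_mul_of_nonneg_right (by linarith [(abs_le.1 (h α β hα hlt hβ)).1])
      (Nat.cast_nonneg _)

theorem card_filter_arc_ge_of_mem_Ico (h : DiscrepancyLE s ε)
    (hs : ∀ y ∈ s, y ∈ Set.Ico 0 (2 * π)) (hε : 0 ≤ ε) {c d : ℝ}
    (hc : c ∈ Set.Ico 0 (2 * π)) (hcd : c ≤ d) (hdc : d ≤ c + 2 * π) :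
    s.card * ((d - c) / (2 * π) - ε) ≤
      ((s.filter fun y => ∃ k : ℤ, c ≤ y + 2 * π * k ∧ y + 2 * π * k < d).card : ℝ) := by
  rw [Multiset.filter_congr fun y hy => exists_int_arc_iff hc hdc (hs y hy)]
  by_cases hd : d ≤ 2 * π
  · rw [Multiset.filter_congr (q := fun y => c ≤ y ∧ y < d) fun y hy => by
      simp only [or_iff_left_iff_imp]; intro; linarith [(hs y hy).1]]
    exact h.card_filter_Ico_ge hε hc.1 hcd hd
  · have hcompl : ∀ y ∈ s,
        ((c ≤ y ∧ y < d) ∨ y + 2 * π < d) ↔ ¬(d - 2 * π ≤ y ∧ y < c) := by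
      intro y hy
      have := (hs y hy).2
      by_cases hcy : c ≤ y
      · simp only [hcy, true_and, not_lt.2 hcy, and_false, not_false_eq_true, iff_true]
        left; linarith
      · simp only [hcy, false_and, false_or, not_le.1 hcy, and_true, not_le]
        constructor <;> intro <;> linarith
    rw [Multiset.filter_congr hcompl]
    have hsplit := congrArg (fun t => (Multiset.card t : ℝ))
      (Multiset.filter_add_not (fun y => d - 2 * π ≤ y ∧ y < c) s)
    simp only [Multiset.card_add, Nat.cast_add] at hsplit
    have hle := h.card_filter_Ico_le hε (α := d - 2 * π) (β := c) (by linarith) (by linarith)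
      hc.2.le
    have hfrac : (c - (d - 2 * π)) / (2 * π) = 1 - (d - c) / (2 * π) := by
      field_simp
      ring
    rw [hfrac] at hle
    linarith

theorem card_filter_arc_ge (h : DiscrepancyLE s ε) (hs : ∀ y ∈ s, y ∈ Set.Ico 0 (2 * π))
    (hε : 0 ≤ ε) {c d : ℝ} (hcd : c ≤ d) (hdc : d ≤ c + 2 * π) :
    s.card * ((d - c) / (2 * π) - ε) ≤
      ((s.filter fun y => ∃ k : ℤ, c ≤ y + 2 * π * k ∧ y + 2 * π * k < d).card : ℝ) := by
  set m := toIcoDiv two_pi_pos 0 c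
  set ψ := toIcoMod two_pi_pos 0 c
  have hψ : ψ ∈ Set.Ico 0 (2 * π) := by simpa using toIcoMod_mem_Ico two_pi_pos 0 c
  have hc : c = ψ + 2 * π * m := by
    have := toIcoMod_add_toIcoDiv_zsmul two_pi_pos 0 c
    rw [zsmul_eq_mul] at this
    linarith
  have hshift : ∀ y, (∃ k : ℤ, c ≤ y + 2 * π * k ∧ y + 2 * π * k < d) ↔
      ∃ k : ℤ, ψ ≤ y + 2 * π * k ∧ y + 2 * π * k < d - 2 * π * m := by
    intro y
    constructor
    · rintro ⟨k, hk⟩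
      exact ⟨k - m, by push_cast; constructor <;> linarith⟩
    · rintro ⟨k, hk⟩
      exact ⟨k + m, by push_cast; constructor <;> linarith⟩
  rw [Multiset.filter_congr fun y _ => hshift y]
  convert h.card_filter_arc_ge_of_mem_Ico hs hε hψ (d := d - 2 * π * m) (by linarith)
    (by linarith) using 4
  linarith

end DiscrepancyLE

theorem stmt11 (P : Polynomial ℂ) (n : ℕ) (hn : 0 < n) (hdeg : P.natDegree = n)
    (h0 : P.eval 0 ≠ 0)
    (B : ℝ)
    (hB : B = Real.log ((⨆ z : Metric.sphere (0:ℂ) 1, ‖P.eval (z : ℂ)‖) /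
      Real.sqrt (‖P.coeff 0 * P.leadingCoeff‖)))
    (hdisc : ∀ α β : ℝ, 0 ≤ α → α < β → β ≤ 2 * Real.pi →
      |((P.roots.filter (fun z => α ≤ arg2pi z ∧ arg2pi z < β)).card : ℝ) / n
        - (β - α) / (2 * Real.pi)| ≤ Real.sqrt (2 * B / n))
    (θ a δn : ℝ) (hθ : θ ∈ Set.Icc (1/2 : ℝ) 1) (ha : 1 < a)
    (hδn : δn = (Real.pi * a / Real.sqrt n) * (2 * B) ^ θ)
    (hδle : δn ≤ Real.pi) :
    ∀ φ : ℝ,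
      (a - 1) * Real.sqrt n * (2 * B) ^ θ ≤
        ((P.roots.filter (fun z => ∃ k : ℤ,
          φ - δn ≤ arg2pi z + 2 * Real.pi * k ∧
          arg2pi z + 2 * Real.pi * k < φ + δn)).card : ℝ) := by
  intro φ
  have hcard : P.roots.card = n :=
    hdeg ▸ (IsAlgClosed.splits P).natDegree_eq_card_roots.symm
  have hB1 : 1 ≤ 2 * B := by
    have := hB ▸ P.log_two_le_log_iSup_div_sqrt (hdeg ▸ hn) (coeff_zero_eq_eval_zero P ▸ h0)
    linarith [Real.log_two_gt_d9]
  have hsqrt_le : √(2 * B) ≤ (2 * B) ^ θ := by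
    rw [Real.sqrt_eq_rpow]
    exact Real.rpow_le_rpow_of_exponent_le hB1 hθ.1
  have hδ : 0 ≤ δn := by rw [hδn]; positivity
  have hroots : DiscrepancyLE (P.roots.map arg2pi) √(2 * B / n) := by
    intro α β hα hαβ hβ
    rw [Multiset.card_map, hcard, Multiset.card_filter_map]
    exact hdisc α β hα hαβ hβ
  have harc := hroots.card_filter_arc_ge
    (Multiset.forall_mem_map_iff.2 fun z _ => arg2pi_mem_Ico z) (Real.sqrt_nonneg _)
    (c := φ - δn) (d := φ + δn) (by linarith) (by linarith)
  rw [Multiset.card_map, hcard, Multiset.card_filter_map] at harc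
  refine le_trans ?_ harc
  have hn' : (0 : ℝ) < n := Nat.cast_pos.2 hn
  calc (a - 1) * √n * (2 * B) ^ θ ≤ a * √n * (2 * B) ^ θ - √n * √(2 * B) := by
        nlinarith [Real.sqrt_nonneg n]
    _ = n * ((φ + δn - (φ - δn)) / (2 * π) - √(2 * B / n)) := by
        rw [hδn, Real.sqrt_div (by linarith)]
        field_simp
        rw [Real.sq_sqrt hn'.le]
        ring
end

section
/- Let γ ∈ (0, 1/2] and δ ∈ [0,1), and set Γ = 2·arcsin((γ/2)·√(4−γ²)). Then the number G = 2π/((1+δ)·Γ) satisfies G ≥ (π/(1+δ))·(1/γ)·(1 − ((π−2)/(2π))·γ²)·(1 − γ²/4)^{−1/4}. -/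
/-!
Put `x = (γ/2)√(4-γ²) = γ√(1-γ²/4)`. Then `1 - x² = (1 - γ²/2)²`, so the Shafer–Fink bound
`arcsin x ≤ πx / (2 + (π-2)√(1-x²))` reads `arcsin x ≤ γ√(1-γ²/4) / (1 - (π-2)γ²/(2π))`, and
`√(1-γ²/4) ≤ (1-γ²/4)^(1/4)`. For `x ≤ 1/2` the Shafer–Fink bound, in the form
`θ(2 + (π-2) cos θ) ≤ π sin θ` with `θ = arcsin x`, follows from the Taylor bounds
`cos θ ≤ 1 - θ²/2 + 5θ⁴/96` and `sin θ ≥ θ - θ³/6`.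
-/

open Real

theorem mul_two_add_mul_cos_le_pi_mul_sin {θ : ℝ} (hθ₀ : 0 ≤ θ) (hθ : θ ≤ 4 / 5) :
    θ * (2 + (π - 2) * cos θ) ≤ π * sin θ := by
  have hcos : cos θ ≤ 1 - θ ^ 2 / 2 + θ ^ 4 * (5 / 96) := by
    have h := cos_bound (x := θ) (by rw [abs_of_nonneg hθ₀]; linarith)
    rw [abs_of_nonneg hθ₀] at h
    linarith [(abs_le.1 h).2]
  have hsin : θ - θ ^ 3 / 6 ≤ sin θ := sin_ge_sub_cube hθ₀
  have hπ₁ : 3.14159 < π := pi_gt_d6.trans' (by norm_num)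
  have hπ₂ : π < 3.15 := pi_lt_d2
  have hθ2 : θ ^ 2 ≤ 16 / 25 := by nlinarith
  have h3 : 0 ≤ θ ^ 3 := by positivity
  calc θ * (2 + (π - 2) * cos θ)
      ≤ θ * (2 + (π - 2) * (1 - θ ^ 2 / 2 + θ ^ 4 * (5 / 96))) := by
        gcongr; linarith
    _ = π * (θ - θ ^ 3 / 6) - θ ^ 3 * ((π - 2) / 2 - π / 6 - (π - 2) * (5 / 96) * θ ^ 2) := by
        ring
    _ ≤ π * (θ - θ ^ 3 / 6) := by
        have : 0 ≤ (π - 2) / 2 - π / 6 - (π - 2) * (5 / 96) * θ ^ 2 := by nlinarith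
        nlinarith
    _ ≤ π * sin θ := by gcongr

theorem arcsin_le_pi_mul_div_two_add_mul_sqrt {x : ℝ} (hx₀ : 0 ≤ x) (hx : x ≤ 1 / 2) :
    arcsin x ≤ π * x / (2 + (π - 2) * √(1 - x ^ 2)) := by
  have hθ₀ : 0 ≤ arcsin x := arcsin_nonneg.2 hx₀
  have hθ : arcsin x ≤ 4 / 5 := by
    have := pi_gt_three
    rw [arcsin_le_iff_le_sin ⟨by linarith, by linarith⟩ ⟨by linarith, by linarith⟩]
    linarith [sin_ge_sub_cube (x := 4 / 5) (by norm_num)]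
  have h := mul_two_add_mul_cos_le_pi_mul_sin hθ₀ hθ
  rw [cos_arcsin, sin_arcsin (by linarith) (by linarith)] at h
  have hpos : 0 < 2 + (π - 2) * √(1 - x ^ 2) := by
    have : 0 < π - 2 := by linarith [pi_gt_three]
    positivity
  rwa [le_div_iff₀ hpos]

theorem sqrt_one_sub_sq_mul_sqrt_one_sub_sq_div_four {γ : ℝ} (hγ : γ ^ 2 ≤ 2) :
    √(1 - (γ * √(1 - γ ^ 2 / 4)) ^ 2) = 1 - γ ^ 2 / 2 := by
  rw [mul_pow, sq_sqrt (by linarith), ← sqrt_sq (x := 1 - γ ^ 2 / 2) (by linarith)]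
  congr 1
  ring

theorem half_mul_sqrt_four_sub_sq (γ : ℝ) : γ / 2 * √(4 - γ ^ 2) = γ * √(1 - γ ^ 2 / 4) := by
  rw [show 4 - γ ^ 2 = 2 ^ 2 * (1 - γ ^ 2 / 4) by ring, sqrt_mul (by norm_num),
    sqrt_sq (by norm_num)]
  ring

theorem arcsin_half_mul_sqrt_four_sub_sq_le {γ : ℝ} (hγ₀ : 0 ≤ γ) (hγ : γ ≤ 1 / 2) :
    arcsin (γ / 2 * √(4 - γ ^ 2)) ≤
      π * (γ * √(1 - γ ^ 2 / 4)) / (2 + (π - 2) * (1 - γ ^ 2 / 2)) := by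
  have hx : γ * √(1 - γ ^ 2 / 4) ≤ 1 / 2 :=
    calc γ * √(1 - γ ^ 2 / 4) ≤ 1 / 2 * 1 := by
          gcongr; exact sqrt_le_one.2 (by nlinarith)
      _ = 1 / 2 := by ring
  rw [half_mul_sqrt_four_sub_sq, ← sqrt_one_sub_sq_mul_sqrt_one_sub_sq_div_four (by nlinarith)]
  exact arcsin_le_pi_mul_div_two_add_mul_sqrt (by positivity) hx

theorem stmt18_general (γ δ Γ G : ℝ) (hγ0 : 0 < γ) (hγ : γ ≤ 1/2)
    (hδ0 : 0 ≤ δ)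
    (hΓ : Γ = 2 * Real.arcsin ((γ / 2) * Real.sqrt (4 - γ^2)))
    (hG : G = 2 * Real.pi / ((1 + δ) * Γ)) :
    G ≥ (Real.pi / (1 + δ)) * (1 / γ) *
      (1 - ((Real.pi - 2) / (2 * Real.pi)) * γ^2) * (1 - γ^2/4) ^ (-(1/4) : ℝ) := by
  have hγ2 : γ ^ 2 ≤ 1 / 4 := by nlinarith
  have hπ : 2 < π := pi_gt_three.trans' (by norm_num)
  have hb₀ : 0 < 1 - γ ^ 2 / 4 := by linarith
  have hD : 0 < 2 + (π - 2) * (1 - γ ^ 2 / 2) := by nlinarith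
  have hA : 0 < arcsin (γ / 2 * √(4 - γ ^ 2)) :=
    arcsin_pos.2 (mul_pos (by positivity) (sqrt_pos.2 (by linarith)))
  set A := arcsin (γ / 2 * √(4 - γ ^ 2))
  set b := 1 - γ ^ 2 / 4
  set D := 2 + (π - 2) * (1 - γ ^ 2 / 2)
  have hAB : A ≤ π * (γ * b ^ (1 / 4 : ℝ)) / D := by
    refine (arcsin_half_mul_sqrt_four_sub_sq_le hγ0.le hγ).trans ?_
    gcongr
    rw [sqrt_eq_rpow]
    exact rpow_le_rpow_of_exponent_ge hb₀ (by linarith [sq_nonneg γ]) (by norm_num)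
  calc π / (1 + δ) * (1 / γ) * (1 - (π - 2) / (2 * π) * γ ^ 2) * b ^ (-(1 / 4) : ℝ)
      = π / ((1 + δ) * (π * (γ * b ^ (1 / 4 : ℝ)) / D)) := by
        rw [rpow_neg hb₀.le]
        field_simp
        ring
    _ ≤ π / ((1 + δ) * A) := by gcongr
    _ = G := by rw [hG, hΓ]; field_simp

theorem stmt18 (γ δ Γ G : ℝ) (hγ0 : 0 < γ) (hγ : γ ≤ 1/2)
    (hδ0 : 0 ≤ δ) (hδ1 : δ < 1)
    (hΓ : Γ = 2 * Real.arcsin ((γ / 2) * Real.sqrt (4 - γ^2)))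
    (hG : G = 2 * Real.pi / ((1 + δ) * Γ)) :
    G ≥ (Real.pi / (1 + δ)) * (1 / γ) *
      (1 - ((Real.pi - 2) / (2 * Real.pi)) * γ^2) * (1 - γ^2/4) ^ (-(1/4) : ℝ) :=
  stmt18_general γ δ Γ G hγ0 hγ hδ0 hΓ hG
end
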